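/- arXiv:1605.07232 — 4 statements merged into one kernel-verified Lean document; each statement's English description precedes it below -/
import Mathlib

section
/- Let 0 ≤ a < 1, b > 0, and c > 0. Then there exists a constant C > 0, independent of t, such that for all t ≥ 0, ∫₀ᵗ e^{-c(t-s)} (t-s)^{-a} (1+s)^{-b} ds ≤ C (1+t)^{-b}. -/
/-!
Since `1 + t ≤ (1 + s) (1 + (t - s))` for `0 ≤ s ≤ t`, the weight `(1 + s)^(-b)` is at most
`(1 + t)^(-b) (1 + (t - s))^b`. The integral is therefore bounded by `(1 + t)^(-b)` times
`∫₀^∞ e^(-c x) x^(-a) (1 + x)^b dx`, which is finite because `a < 1` and `c > 0`.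
-/

open Real MeasureTheory Set

lemma one_add_rpow_le_two_rpow_mul {x b : ℝ} (hx : 0 ≤ x) (hb : 0 ≤ b) :
    (1 + x) ^ b ≤ 2 ^ b * (1 + x ^ b) := by
  have hmax : max 1 x ^ b ≤ 1 + x ^ b := by
    rcases max_cases 1 x with ⟨h, _⟩ | ⟨h, _⟩ <;> rw [h]
    · simp only [one_rpow, le_add_iff_nonneg_right]; positivity
    · linarith
  calc (1 + x) ^ b ≤ (2 * max 1 x) ^ b :=
        rpow_le_rpow (by positivity) (by linarith [le_max_left 1 x, le_max_right 1 x]) hb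
    _ = 2 ^ b * max 1 x ^ b := mul_rpow zero_le_two (by positivity)
    _ ≤ 2 ^ b * (1 + x ^ b) := by gcongr

lemma integrableOn_exp_mul_rpow_mul_one_add_rpow {a b c : ℝ} (ha : a < 1) (hb : 0 ≤ b)
    (hc : 0 < c) :
    IntegrableOn (fun x : ℝ => exp (-c * x) * x ^ (-a) * (1 + x) ^ b) (Ioi 0) := by
  have hint : ∀ s : ℝ, -1 < s → IntegrableOn (fun x : ℝ => x ^ s * exp (-c * x)) (Ioi 0) :=
    fun s hs => by simpa using integrableOn_rpow_mul_exp_neg_mul_rpow hs zero_lt_one hc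
  have hmajorant := ((hint (-a) (by linarith)).add (hint (b - a) (by linarith))).const_mul (2 ^ b)
  refine hmajorant.mono' (by fun_prop) ?_
  filter_upwards [ae_restrict_mem measurableSet_Ioi] with x (hx : 0 < x)
  rw [norm_of_nonneg (by positivity), Pi.add_apply, rpow_sub hx, rpow_neg hx.le]
  calc exp (-c * x) * (x ^ a)⁻¹ * (1 + x) ^ b
      ≤ exp (-c * x) * (x ^ a)⁻¹ * (2 ^ b * (1 + x ^ b)) := by
        gcongr; exact one_add_rpow_le_two_rpow_mul hx.le hb
    _ = 2 ^ b * ((x ^ a)⁻¹ * exp (-c * x) + x ^ b / x ^ a * exp (-c * x)) := by ring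

lemma one_add_rpow_neg_le_mul {s t b : ℝ} (hs : 0 ≤ s) (hst : s ≤ t) (hb : 0 ≤ b) :
    (1 + s) ^ (-b) ≤ (1 + t) ^ (-b) * (1 + (t - s)) ^ b := by
  have hs1 : 0 < 1 + s := by linarith
  have hts1 : 0 < 1 + (t - s) := by linarith
  have hsplit : 1 + t ≤ (1 + s) * (1 + (t - s)) := by nlinarith
  have ht1 : 0 < 1 + t := by linarith
  rw [rpow_neg hs1.le, rpow_neg ht1.le, inv_mul_eq_div, le_div_iff₀ (by positivity),
    ← div_eq_inv_mul, div_le_iff₀ (by positivity), mul_comm, ← mul_rpow hs1.le hts1.le]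
  exact rpow_le_rpow (by linarith) hsplit hb

lemma intervalIntegral_le_mul_integral_Ioi_of_le_comp_sub {f g : ℝ → ℝ} {t K : ℝ} (ht : 0 ≤ t)
    (hK : 0 ≤ K) (hg : IntegrableOn g (Ioi 0)) (hg0 : ∀ x ∈ Ioi 0, 0 ≤ g x)
    (hf0 : ∀ s ∈ Ioc 0 t, 0 ≤ f s) (hfg : ∀ s ∈ Ioc 0 t, f s ≤ K * g (t - s)) :
    ∫ s in (0:ℝ)..t, f s ≤ K * ∫ x in Ioi 0, g x := by
  have hgt : IntervalIntegrable (fun s => g (t - s)) volume 0 t := by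
    have : IntervalIntegrable g volume 0 t :=
      (intervalIntegrable_iff_integrableOn_Ioc_of_le ht).2 (hg.mono_set Ioc_subset_Ioi_self)
    simpa using (this.comp_sub_left t).symm
  rw [intervalIntegral.integral_of_le ht]
  calc ∫ s in Ioc 0 t, f s ≤ ∫ s in Ioc 0 t, K * g (t - s) :=
        integral_mono_of_nonneg (ae_restrict_of_forall_mem measurableSet_Ioc hf0)
          ((hgt.const_mul K).1) (ae_restrict_of_forall_mem measurableSet_Ioc hfg)
    _ = K * ∫ x in (0:ℝ)..t, g x := by
        rw [integral_const_mul, ← intervalIntegral.integral_of_le ht,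
          intervalIntegral.integral_comp_sub_left g t, sub_self, sub_zero]
    _ ≤ K * ∫ x in Ioi 0, g x := by
        rw [intervalIntegral.integral_of_le ht]
        exact mul_le_mul_of_nonneg_left (setIntegral_mono_set hg (ae_restrict_of_forall_mem measurableSet_Ioi hg0)
          Ioc_subset_Ioi_self.eventuallyLE) hK

theorem stmt1_general (a b c : ℝ) (ha1 : a < 1) (hb : 0 < b) (hc : 0 < c) :
    ∃ C > 0, ∀ t : ℝ, 0 ≤ t →
      ∫ s in (0:ℝ)..t, Real.exp (-c * (t - s)) * (t - s) ^ (-a) * (1 + s) ^ (-b)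
        ≤ C * (1 + t) ^ (-b) := by
  set g : ℝ → ℝ := fun x => exp (-c * x) * x ^ (-a) * (1 + x) ^ b
  have hg : IntegrableOn g (Ioi 0) := integrableOn_exp_mul_rpow_mul_one_add_rpow ha1 hb.le hc
  have hg0 : ∀ x ∈ Ioi (0:ℝ), 0 ≤ g x := fun x (hx : 0 < x) => by positivity
  set G := ∫ x in Ioi 0, g x
  have hG : 0 ≤ G := setIntegral_nonneg measurableSet_Ioi hg0
  refine ⟨G + 1, by linarith, fun t ht => ?_⟩
  have hwt : 0 ≤ (1 + t) ^ (-b) := rpow_nonneg (by linarith) _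
  calc _ ≤ (1 + t) ^ (-b) * G := by
        refine intervalIntegral_le_mul_integral_Ioi_of_le_comp_sub ht hwt hg hg0
          (fun s ⟨hs, hst⟩ => ?_) (fun s ⟨hs, hst⟩ => ?_)
        · have : 0 ≤ t - s := by linarith
          positivity
        · have : 0 ≤ t - s := by linarith
          calc exp (-c * (t - s)) * (t - s) ^ (-a) * (1 + s) ^ (-b)
              ≤ exp (-c * (t - s)) * (t - s) ^ (-a) * ((1 + t) ^ (-b) * (1 + (t - s)) ^ b) := by
                gcongr; exact one_add_rpow_neg_le_mul hs.le hst hb.le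
            _ = (1 + t) ^ (-b) * g (t - s) := by ring
    _ ≤ (G + 1) * (1 + t) ^ (-b) := by nlinarith

theorem stmt1 (a b c : ℝ) (ha0 : 0 ≤ a) (ha1 : a < 1) (hb : 0 < b) (hc : 0 < c) :
    ∃ C > 0, ∀ t : ℝ, 0 ≤ t →
      ∫ s in (0:ℝ)..t, Real.exp (-c * (t - s)) * (t - s) ^ (-a) * (1 + s) ^ (-b)
        ≤ C * (1 + t) ^ (-b) :=
  stmt1_general a b c ha1 hb hc
end

section
/- Let n ≥ 1 and suppose ξ ∈ ℝⁿ with |ξ| ≤ 1/2. Then there exists a constant C > 0 (independent of t and ξ) such that for all t ≥ 0, |e^{-t|ξ|²} - e^{-t}|ξ|²| ≤ C e^{-(1+t)|ξ|²}. -/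
open Real MeasureTheory

theorem stmt3 (n : ℕ) (hn : 1 ≤ n) :
    ∃ C > 0, ∀ ξ : EuclideanSpace ℝ (Fin n), ‖ξ‖ ≤ 1 / 2 → ∀ t : ℝ, 0 ≤ t →
      |Real.exp (-t * ‖ξ‖ ^ 2) - Real.exp (-t) * ‖ξ‖ ^ 2|
        ≤ C * Real.exp (-(1 + t) * ‖ξ‖ ^ 2) := by
  refine ⟨2 * Real.exp (1/4), by positivity, ?_⟩
  intro ξ hξ t ht
  set x := ‖ξ‖ ^ 2 with hxdef
  have hx0 : 0 ≤ x := sq_nonneg _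
  have hx1 : x ≤ 1/4 := by
    have h := sq_le_sq' (by linarith [norm_nonneg ξ] : -(1/2) ≤ ‖ξ‖) hξ
    calc x ≤ (1/2)^2 := h
      _ = 1/4 := by norm_num
  have h1 : Real.exp (-t) * x ≤ Real.exp (-t * x) := by
    calc Real.exp (-t) * x ≤ Real.exp (-t * x) * 1 :=
          mul_le_mul (Real.exp_le_exp.2 (by nlinarith)) (by linarith) hx0
            (Real.exp_pos _).le
      _ = Real.exp (-t * x) := mul_one _
  have h2 : Real.exp (-t * x) ≤ Real.exp (1/4) * Real.exp (-(1 + t) * x) := by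
    rw [← Real.exp_add]
    exact Real.exp_le_exp.2 (by nlinarith)
  have h3 : 0 ≤ Real.exp (-t) * x := mul_nonneg (Real.exp_pos _).le hx0
  have h4 : 0 < Real.exp (-t * x) := Real.exp_pos _
  rw [abs_sub_le_iff]
  constructor <;> nlinarith
end

section
/- Let n ≥ 1 and suppose ξ ∈ ℝⁿ with |ξ| ≤ 1/2. Then there exists a constant C > 0 such that for all t ≥ 0, |∇_ξ(e^{-t|ξ|²} - e^{-t}|ξ|²)| ≤ C e^{-(1+t)|ξ|²} (1+t)|ξ|. -/
/-!
The function is radial, `φ (‖η‖²)` with `φ s = exp (-t s) - exp (-t) s`, so its gradient at `ξ` has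
norm `2 |φ' (‖ξ‖²)| ‖ξ‖`. With `s = ‖ξ‖²`, the two terms of `φ' s = -t exp (-t s) - exp (-t)` are
`t · exp s · exp (-(1 + t) s)` and `exp s · exp (-(1 + t) s) · exp (-t (1 - s))`, and `s ≤ 1`
makes the last factor at most `1` and `exp s` at most `e`.
-/

open Real

theorem norm_fderiv_comp_norm_sq {E : Type*} [NormedAddCommGroup E] [InnerProductSpace ℝ E]
    {φ : ℝ → ℝ} {φ' : ℝ} {x : E} (h : HasDerivAt φ φ' (‖x‖ ^ 2)) :
    ‖fderiv ℝ (fun y => φ (‖y‖ ^ 2)) x‖ = 2 * |φ'| * ‖x‖ := by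
  have hφ : HasFDerivAt (fun y => φ (‖y‖ ^ 2)) (φ' • (2 : ℕ) • innerSL ℝ x) x :=
    h.comp_hasFDerivAt x (hasStrictFDerivAt_norm_sq x).hasFDerivAt
  rw [hφ.fderiv, two_nsmul, ← two_smul ℝ, norm_smul, norm_smul, Real.norm_two,
    innerSL_apply_norm, Real.norm_eq_abs]
  ring

theorem exp_neg_le_exp_mul_exp_neg_mul {s t : ℝ} (hs : s ≤ 1) (ht : 0 ≤ t) :
    exp (-t) ≤ exp s * exp (-(1 + t) * s) := by
  rw [← exp_add]
  exact exp_le_exp.2 (by nlinarith)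

theorem abs_neg_mul_exp_sub_exp_le {s t : ℝ} (hs : s ≤ 1) (ht : 0 ≤ t) :
    |exp (-t * s) * -t - exp (-t)| ≤ exp s * exp (-(1 + t) * s) * (1 + t) := by
  have hts : exp (-t * s) = exp s * exp (-(1 + t) * s) := by
    rw [← exp_add]; ring_nf
  calc |exp (-t * s) * -t - exp (-t)| = t * exp (-t * s) + exp (-t) := by
        rw [abs_sub_comm, abs_of_nonneg (by nlinarith [exp_pos (-t * s), exp_pos (-t)])]
        ring
    _ ≤ t * (exp s * exp (-(1 + t) * s)) + exp s * exp (-(1 + t) * s) := by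
        rw [hts]; gcongr; exact exp_neg_le_exp_mul_exp_neg_mul hs ht
    _ = exp s * exp (-(1 + t) * s) * (1 + t) := by ring

theorem stmt4_general (n : ℕ) :
    ∃ C > 0, ∀ ξ : EuclideanSpace ℝ (Fin n), ‖ξ‖ ≤ 1 / 2 → ∀ t : ℝ, 0 ≤ t →
      ‖fderiv ℝ (fun η : EuclideanSpace ℝ (Fin n) =>
          Real.exp (-t * ‖η‖ ^ 2) - Real.exp (-t) * ‖η‖ ^ 2) ξ‖
        ≤ C * Real.exp (-(1 + t) * ‖ξ‖ ^ 2) * (1 + t) * ‖ξ‖ := by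
  refine ⟨2 * exp 1, by positivity, fun ξ hξ t ht => ?_⟩
  have hs : ‖ξ‖ ^ 2 ≤ 1 := by nlinarith [norm_nonneg ξ]
  have hφ : HasDerivAt (fun s => exp (-t * s) - exp (-t) * s)
      (exp (-t * ‖ξ‖ ^ 2) * -t - exp (-t)) (‖ξ‖ ^ 2) := by
    simpa using
      ((hasDerivAt_id _).const_mul (-t)).exp.fun_sub ((hasDerivAt_id _).const_mul (exp (-t)))
  rw [norm_fderiv_comp_norm_sq hφ]
  calc 2 * |exp (-t * ‖ξ‖ ^ 2) * -t - exp (-t)| * ‖ξ‖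
      ≤ 2 * (exp (‖ξ‖ ^ 2) * exp (-(1 + t) * ‖ξ‖ ^ 2) * (1 + t)) * ‖ξ‖ := by
        gcongr; exact abs_neg_mul_exp_sub_exp_le hs ht
    _ ≤ 2 * (exp 1 * exp (-(1 + t) * ‖ξ‖ ^ 2) * (1 + t)) * ‖ξ‖ := by
        gcongr
    _ = 2 * exp 1 * exp (-(1 + t) * ‖ξ‖ ^ 2) * (1 + t) * ‖ξ‖ := by ring

theorem stmt4 (n : ℕ) (hn : 1 ≤ n) :
    ∃ C > 0, ∀ ξ : EuclideanSpace ℝ (Fin n), ‖ξ‖ ≤ 1 / 2 → ∀ t : ℝ, 0 ≤ t →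
      ‖fderiv ℝ (fun η : EuclideanSpace ℝ (Fin n) =>
          Real.exp (-t * ‖η‖ ^ 2) - Real.exp (-t) * ‖η‖ ^ 2) ξ‖
        ≤ C * Real.exp (-(1 + t) * ‖ξ‖ ^ 2) * (1 + t) * ‖ξ‖ :=
  stmt4_general n
end

section
/- Let n ≥ 1 and suppose ξ ∈ ℝⁿ with |ξ| ≤ 1/2. Then there exists a constant C > 0 such that for all t ≥ 0, the Hessian in ξ of the function e^{-t|ξ|²} - e^{-t}|ξ|² satisfies |∇²_ξ(e^{-t|ξ|²} - e^{-t}|ξ|²)| ≤ C e^{-(1+t)|ξ|²} (1 + t + t²|ξ|²). -/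
/-!
For a radial function `η ↦ g (‖η‖ ^ 2)` the Hessian at `ξ` is the bilinear form
`2 g'(‖ξ‖²) ⟪v, w⟫ + 4 g''(‖ξ‖²) ⟪ξ, v⟫ ⟪ξ, w⟫`, of norm at most `2 |g'| + 4 |g''| ‖ξ‖²`.
For `g s = exp (-t s) - exp (-t) s` this is `2 (t e^{-ts} + e^{-t}) + 4 t² e^{-ts} s`.
When `s = ‖ξ‖² ≤ 1/4` we have `e^{-t} ≤ e^{-ts}` and `e^{-ts} = e^s e^{-(1+t)s} ≤ 2 e^{-(1+t)s}`,
which gives the bound with `C = 8`.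
-/

open Real RealInnerProductSpace

section RadialHessian

variable {E : Type*} [NormedAddCommGroup E] [InnerProductSpace ℝ E]

lemma hasFDerivAt_comp_norm_sq {g : ℝ → ℝ} {g' : ℝ} (η : E) (hg : HasDerivAt g g' (‖η‖ ^ 2)) :
    HasFDerivAt (fun η : E => g (‖η‖ ^ 2)) ((2 * g') • innerSL ℝ η) η :=
  (hg.comp_hasFDerivAt η (hasStrictFDerivAt_norm_sq η).hasFDerivAt).congr_fderiv <| by module

variable {g g' : ℝ → ℝ}

lemma fderiv_comp_norm_sq (hg : ∀ s, HasDerivAt g (g' s) s) :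
    fderiv ℝ (fun η : E => g (‖η‖ ^ 2)) = fun η => (2 * g' (‖η‖ ^ 2)) • innerSL ℝ η :=
  funext fun η => (hasFDerivAt_comp_norm_sq η (hg _)).fderiv

lemma fderiv_fderiv_comp_norm_sq_apply (hg : ∀ s, HasDerivAt g (g' s) s) {g'' : ℝ} (ξ : E)
    (hg' : HasDerivAt g' g'' (‖ξ‖ ^ 2)) (v w : E) :
    fderiv ℝ (fderiv ℝ fun η : E => g (‖η‖ ^ 2)) ξ v w
      = 2 * g' (‖ξ‖ ^ 2) * ⟪v, w⟫ + 4 * g'' * ⟪ξ, v⟫ * ⟪ξ, w⟫ := by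
  -- `innerSL ℝ` is typed as conjugate-linear; the ascription views it as a real bilinear map.
  have h := ((hasFDerivAt_comp_norm_sq ξ hg').const_mul 2).fun_smul
    (innerSL ℝ : E →L[ℝ] E →L[ℝ] ℝ).hasFDerivAt
  rw [fderiv_comp_norm_sq hg, h.fderiv]
  have hL (x y : E) : (innerSL ℝ : E →L[ℝ] E →L[ℝ] ℝ) x y = ⟪x, y⟫ := rfl
  simp only [add_apply, smul_apply, ContinuousLinearMap.smulRight_apply, hL, smul_eq_mul]
  ring

lemma norm_iteratedFDeriv_two_comp_norm_sq_le (hg : ∀ s, HasDerivAt g (g' s) s) {g'' : ℝ}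
    (ξ : E) (hg' : HasDerivAt g' g'' (‖ξ‖ ^ 2)) :
    ‖iteratedFDeriv ℝ 2 (fun η : E => g (‖η‖ ^ 2)) ξ‖
      ≤ 2 * |g' (‖ξ‖ ^ 2)| + 4 * |g''| * ‖ξ‖ ^ 2 := by
  rw [← norm_iteratedFDeriv_fderiv, norm_iteratedFDeriv_one]
  refine ContinuousLinearMap.opNorm_le_bound₂ _ (by positivity) fun v w => ?_
  rw [fderiv_fderiv_comp_norm_sq_apply hg ξ hg', Real.norm_eq_abs]
  calc |2 * g' (‖ξ‖ ^ 2) * ⟪v, w⟫ + 4 * g'' * ⟪ξ, v⟫ * ⟪ξ, w⟫|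
      ≤ 2 * |g' (‖ξ‖ ^ 2)| * |⟪v, w⟫| + 4 * |g''| * |⟪ξ, v⟫| * |⟪ξ, w⟫| := by
        refine (abs_add_le _ _).trans_eq ?_
        simp [abs_mul]
    _ ≤ 2 * |g' (‖ξ‖ ^ 2)| * (‖v‖ * ‖w‖) + 4 * |g''| * (‖ξ‖ * ‖v‖) * (‖ξ‖ * ‖w‖) := by
        gcongr <;> exact abs_real_inner_le_norm _ _
    _ = (2 * |g' (‖ξ‖ ^ 2)| + 4 * |g''| * ‖ξ‖ ^ 2) * ‖v‖ * ‖w‖ := by ring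

end RadialHessian

lemma hasDerivAt_exp_neg_mul_sub_exp_neg_mul (t s : ℝ) :
    HasDerivAt (fun s => exp (-t * s) - exp (-t) * s) (-t * exp (-t * s) - exp (-t)) s :=
  (((hasDerivAt_id' s).const_mul (-t)).exp.fun_sub
    ((hasDerivAt_id' s).const_mul (exp (-t)))).congr_deriv (by ring)

lemma hasDerivAt_neg_mul_exp_neg_mul_sub_exp_neg (t s : ℝ) :
    HasDerivAt (fun s => -t * exp (-t * s) - exp (-t)) (t ^ 2 * exp (-t * s)) s :=
  ((((hasDerivAt_id' s).const_mul (-t)).exp.const_mul (-t)).sub_const (exp (-t))).congr_deriv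
    (by ring)

lemma exp_neg_mul_le_two_mul_exp_neg_one_add_mul {s : ℝ} (hs₀ : 0 ≤ s) (hs : s ≤ 1 / 4) (t : ℝ) :
    exp (-t * s) ≤ 2 * exp (-(1 + t) * s) := by
  have hexp : exp s ≤ 2 :=
    calc exp s ≤ 1 / (1 - s) := exp_bound_div_one_sub_of_interval hs₀ (by linarith)
      _ ≤ 2 := by rw [div_le_iff₀ (by linarith)]; linarith
  calc exp (-t * s) = exp s * exp (-(1 + t) * s) := by rw [← exp_add]; ring_nf
    _ ≤ 2 * exp (-(1 + t) * s) := by gcongr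

theorem norm_iteratedFDeriv_two_exp_neg_mul_norm_sq_sub_le {E : Type*} [NormedAddCommGroup E]
    [InnerProductSpace ℝ E] (ξ : E) (hξ : ‖ξ‖ ≤ 1 / 2) (t : ℝ) (ht : 0 ≤ t) :
    ‖iteratedFDeriv ℝ 2 (fun η : E => exp (-t * ‖η‖ ^ 2) - exp (-t) * ‖η‖ ^ 2) ξ‖
      ≤ 8 * exp (-(1 + t) * ‖ξ‖ ^ 2) * (1 + t + t ^ 2 * ‖ξ‖ ^ 2) := by
  set s := ‖ξ‖ ^ 2
  have hs₀ : 0 ≤ s := by positivity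
  have hs : s ≤ 1 / 4 := by nlinarith [norm_nonneg ξ]
  have hexp_neg : exp (-t) ≤ exp (-t * s) := exp_le_exp.2 (by nlinarith)
  have hexp := exp_neg_mul_le_two_mul_exp_neg_one_add_mul hs₀ hs t
  calc _ ≤ 2 * |-t * exp (-t * s) - exp (-t)| + 4 * |t ^ 2 * exp (-t * s)| * s :=
        norm_iteratedFDeriv_two_comp_norm_sq_le (hasDerivAt_exp_neg_mul_sub_exp_neg_mul t) ξ
          (hasDerivAt_neg_mul_exp_neg_mul_sub_exp_neg t s)
    _ = 2 * (t * exp (-t * s) + exp (-t)) + 4 * t ^ 2 * exp (-t * s) * s := by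
        rw [abs_of_nonpos (by nlinarith [exp_pos (-t * s), exp_pos (-t)]),
          abs_of_nonneg (by positivity)]
        ring
    _ ≤ 4 * (1 + t + t ^ 2 * s) * exp (-t * s) := by nlinarith [exp_pos (-t * s)]
    _ ≤ 4 * (1 + t + t ^ 2 * s) * (2 * exp (-(1 + t) * s)) := by gcongr
    _ = 8 * exp (-(1 + t) * s) * (1 + t + t ^ 2 * s) := by ring

theorem stmt5_general (n : ℕ) :
    ∃ C > 0, ∀ ξ : EuclideanSpace ℝ (Fin n), ‖ξ‖ ≤ 1 / 2 → ∀ t : ℝ, 0 ≤ t →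
      ‖iteratedFDeriv ℝ 2 (fun η : EuclideanSpace ℝ (Fin n) =>
          Real.exp (-t * ‖η‖ ^ 2) - Real.exp (-t) * ‖η‖ ^ 2) ξ‖
        ≤ C * Real.exp (-(1 + t) * ‖ξ‖ ^ 2) * (1 + t + t ^ 2 * ‖ξ‖ ^ 2) :=
  ⟨8, by norm_num, norm_iteratedFDeriv_two_exp_neg_mul_norm_sq_sub_le⟩

theorem stmt5 (n : ℕ) (hn : 1 ≤ n) :
    ∃ C > 0, ∀ ξ : EuclideanSpace ℝ (Fin n), ‖ξ‖ ≤ 1 / 2 → ∀ t : ℝ, 0 ≤ t →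
      ‖iteratedFDeriv ℝ 2 (fun η : EuclideanSpace ℝ (Fin n) =>
          Real.exp (-t * ‖η‖ ^ 2) - Real.exp (-t) * ‖η‖ ^ 2) ξ‖
        ≤ C * Real.exp (-(1 + t) * ‖ξ‖ ^ 2) * (1 + t + t ^ 2 * ‖ξ‖ ^ 2) :=
  stmt5_general n
end
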